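/- Let V be a subspace, 0 ≤ Ω ≤ I, and s, ε ∈ (0,1). If min over density operators ρ with range(ρ) ⊆ V and σ with tr(σ Π_V) ≤ 1 − ε of tr(Ω(ρ − σ)) exceeds ε·s, then Δ₂ = Π_V Ω Π_V − (tr(Ω Π_V)/tr(Π_V))·Π_V satisfies ‖Δ₂‖_∞ < ε/(1−ε). -/

import Mathlib

open Matrix
open scoped ComplexOrder

namespace QSVQDH

variable {d : ℕ}

/-- Schatten 1-norm (trace norm). -/
noncomputable def trNorm (A : Matrix (Fin d) (Fin d) ℂ) : ℝ :=
  ((Matrix.posSemidef_conjTranspose_mul_self A).1.eigenvectorUnitary.1 *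
    Matrix.diagonal (fun i => ((Real.sqrt
      ((Matrix.posSemidef_conjTranspose_mul_self A).1.eigenvalues i) : ℝ) : ℂ)) *
    (star (Matrix.posSemidef_conjTranspose_mul_self A).1.eigenvectorUnitary :
      Matrix (Fin d) (Fin d) ℂ)).trace.re

/-- Schatten 2-norm (Hilbert–Schmidt norm). -/
noncomputable def hsNorm (A : Matrix (Fin d) (Fin d) ℂ) : ℝ :=
  Real.sqrt ((Aᴴ * A).trace.re)

/-- Operator norm. -/
noncomputable def opNorm (A : Matrix (Fin d) (Fin d) ℂ) : ℝ :=
  ‖Matrix.toEuclideanCLM (𝕜 := ℂ) A‖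

/-- Density operator: positive semidefinite with unit trace. -/
def IsDensity (ρ : Matrix (Fin d) (Fin d) ℂ) : Prop := ρ.PosSemidef ∧ ρ.trace = 1

/-- POVM element: 0 ≤ M ≤ I. -/
def IsPOVMElem (M : Matrix (Fin d) (Fin d) ℂ) : Prop := M.PosSemidef ∧ (1 - M).PosSemidef

/-- A measurement class of binary effects: contains 0, consists of POVM elements,
is convex, and is closed under M ↦ I − M. -/
def IsMClass (Mset : Set (Matrix (Fin d) (Fin d) ℂ)) : Prop :=
  0 ∈ Mset ∧ (∀ M ∈ Mset, IsPOVMElem M) ∧ Convex ℝ Mset ∧ (∀ M ∈ Mset, 1 - M ∈ Mset)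

/-- The M-seminorm ‖Δ‖_M = sup_{M ∈ Mset} (2 tr(MΔ) − tr Δ). -/
noncomputable def Mnorm (Mset : Set (Matrix (Fin d) (Fin d) ℂ))
    (Δ : Matrix (Fin d) (Fin d) ℂ) : ℝ :=
  sSup ((fun M => 2 * (M * Δ).trace.re - Δ.trace.re) '' Mset)

/-- The ε-distinguishability ratio μ_{ρ,M}(ε). -/
noncomputable def mu (Mset : Set (Matrix (Fin d) (Fin d) ℂ))
    (ρ : Matrix (Fin d) (Fin d) ℂ) (ε : ℝ) : ℝ :=
  (1 / (2 * ε)) *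
    sInf ((fun σ => Mnorm Mset (ρ - σ)) '' {σ | IsDensity σ ∧ 2 * ε ≤ trNorm (ρ - σ)})

/-- The ε-visibility γ_{V,M}(ε), where the subspace V is given by its
orthogonal projector P. -/
noncomputable def gamma (Mset : Set (Matrix (Fin d) (Fin d) ℂ))
    (P : Matrix (Fin d) (Fin d) ℂ) (ε : ℝ) : ℝ :=
  (1 / ε) * sSup ((fun Ω =>
      sInf ((fun p : Matrix (Fin d) (Fin d) ℂ × Matrix (Fin d) (Fin d) ℂ =>
          (Ω * (p.1 - p.2)).trace.re) ''
        {p | IsDensity p.1 ∧ P * p.1 = p.1 ∧ IsDensity p.2 ∧ (p.2 * P).trace.re ≤ 1 - ε}))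
    '' Mset)

/-- The ε-visibility in its minimax (minimum) form. -/
noncomputable def gammaMin (Mset : Set (Matrix (Fin d) (Fin d) ℂ))
    (P : Matrix (Fin d) (Fin d) ℂ) (ε : ℝ) : ℝ :=
  sInf ((fun p : Matrix (Fin d) (Fin d) ℂ × Matrix (Fin d) (Fin d) ℂ =>
      (1 / (2 * ε)) * Mnorm Mset (p.1 - p.2)) ''
    {p | IsDensity p.1 ∧ P * p.1 = p.1 ∧ IsDensity p.2 ∧ (p.2 * P).trace.re ≤ 1 - ε})

/-- μ_{ρ,M}(1), defined through perfectly distinguishable (orthogonal) counterparts. -/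
noncomputable def muone (Mset : Set (Matrix (Fin d) (Fin d) ℂ))
    (ρ : Matrix (Fin d) (Fin d) ℂ) : ℝ :=
  (1 / 2) * sInf ((fun σ => Mnorm Mset (ρ - σ)) '' {σ | IsDensity σ ∧ (ρ * σ).trace = 0})

/-- The distinguishability ratio μ̂_{ρ,M}. -/
noncomputable def muhat (Mset : Set (Matrix (Fin d) (Fin d) ℂ))
    (ρ : Matrix (Fin d) (Fin d) ℂ) : ℝ :=
  sInf ((fun σ => Mnorm Mset (ρ - σ) / trNorm (ρ - σ)) '' {σ | IsDensity σ ∧ σ ≠ ρ})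

/-!
Let `t = tr(ΩΠ_V) / tr Π_V`, the expectation of `Ω` in the maximally mixed state on `V`, and let
`τ` be the maximally mixed state on `V^⊥`. For states `ρ, ρ'` supported on `V`, the mixture
`σ = (1 - ε) ρ' + ε τ` has `tr(σΠ_V) = 1 - ε`, so the hypothesis and `0 ≤ Ω ≤ I` give
`ε s < tr Ωρ - (1 - ε) tr Ωρ' - ε tr Ωτ ≤ tr Ωρ - tr Ωρ' + ε`.
Hence `|tr Ωρ - t| < ε (1 - s)` for every state `ρ` on `V`, in particular for pure ones, so the
quadratic form of the Hermitian matrix `Δ₂ = Π_V (Ω - t) Π_V` is bounded by `ε (1 - s)` on unit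
vectors and `‖Δ₂‖_∞ ≤ ε (1 - s) < ε / (1 - ε)`.
-/

open scoped MatrixOrder

lemma _root_.Matrix.PosSemidef.re_trace_mul_nonneg {n 𝕜 : Type*} [Fintype n] [DecidableEq n]
    [RCLike 𝕜] {A B : Matrix n n 𝕜} (hA : A.PosSemidef) (hB : B.PosSemidef) :
    0 ≤ RCLike.re (A * B).trace := by
  obtain ⟨C, rfl⟩ := CStarAlgebra.nonneg_iff_eq_star_mul_self.mp hA.nonneg
  rw [mul_assoc, trace_mul_comm, star_eq_conjTranspose]
  exact (RCLike.nonneg_iff.mp (hB.mul_mul_conjTranspose_same C).trace_nonneg).1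

lemma _root_.Matrix.PosSemidef.re_trace_pos {n 𝕜 : Type*} [Fintype n] [RCLike 𝕜]
    {A : Matrix n n 𝕜} (hA : A.PosSemidef) (hA0 : A ≠ 0) : 0 < RCLike.re A.trace :=
  (RCLike.pos_iff.mp (hA.trace_nonneg.lt_of_ne (Ne.symm (hA0 ∘ hA.trace_eq_zero_iff.mp)))).1

lemma opNorm_le_of_abs_re_dotProduct_le {A : Matrix (Fin d) (Fin d) ℂ} (hA : A.IsHermitian)
    {c : ℝ} (hc : 0 ≤ c) (h : ∀ x, |(star x ⬝ᵥ (A *ᵥ x)).re| ≤ c * (star x ⬝ᵥ x).re) :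
    opNorm A ≤ c := by
  have hsymm : (toEuclideanCLM (𝕜 := ℂ) A : EuclideanSpace ℂ (Fin d) →ₗ[ℂ] _).IsSymmetric := by
    rw [coe_toEuclideanCLM_eq_toEuclideanLin]
    exact isSymmetric_toEuclideanLin_iff.mpr hA
  rw [opNorm, ContinuousLinearMap.norm_eq_iSup_rayleighQuotient _ hsymm]
  refine ciSup_le fun x => ?_
  have hnorm : ‖x‖ ^ 2 = (star x.ofLp ⬝ᵥ x.ofLp).re := by
    rw [← RCLike.re_to_complex, ← inner_self_eq_norm_sq (𝕜 := ℂ),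
      EuclideanSpace.inner_eq_star_dotProduct, dotProduct_comm]
  have hform : (toEuclideanCLM (𝕜 := ℂ) A).reApplyInnerSelf x =
      (star x.ofLp ⬝ᵥ (A *ᵥ x.ofLp)).re := by
    rw [ContinuousLinearMap.reApplyInnerSelf_apply, inner_re_symm,
      EuclideanSpace.inner_eq_star_dotProduct, ofLp_toEuclideanCLM, dotProduct_comm]
    rfl
  rw [ContinuousLinearMap.rayleighQuotient, abs_div, abs_sq, hform, hnorm]
  rcases (sq_nonneg ‖x‖).eq_or_lt with hx | hx
  · rw [← hnorm, ← hx, div_zero]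
    exact hc
  · rw [hnorm] at hx
    exact div_le_of_le_mul₀ hx.le hc (h _)

lemma convex_isDensity : Convex ℝ {ρ : Matrix (Fin d) (Fin d) ℂ | IsDensity ρ} := by
  intro ρ hρ σ hσ a b ha hb hab
  refine ⟨(hρ.1.smul ha).add (hσ.1.smul hb), ?_⟩
  rw [trace_add, trace_smul, trace_smul, hρ.2, hσ.2, ← add_smul, hab, one_smul]

lemma isDensity_inv_trace_smul {ρ : Matrix (Fin d) (Fin d) ℂ} (hρ : ρ.PosSemidef)
    (hρ0 : ρ ≠ 0) : IsDensity ((ρ.trace.re)⁻¹ • ρ) := by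
  have hpos : 0 < ρ.trace.re := hρ.re_trace_pos hρ0
  refine ⟨hρ.smul (inv_nonneg.mpr hpos.le), ?_⟩
  rw [trace_smul, Complex.eq_re_of_ofReal_le hρ.trace_nonneg, Complex.ofReal_re,
    Complex.real_smul, ← Complex.ofReal_mul, inv_mul_cancel₀ hpos.ne', Complex.ofReal_one]

lemma IsPOVMElem.re_trace_mul_le_one {Ω ρ : Matrix (Fin d) (Fin d) ℂ} (hΩ : IsPOVMElem Ω)
    (hρ : IsDensity ρ) : (Ω * ρ).trace.re ≤ 1 := by
  have h := hΩ.2.re_trace_mul_nonneg hρ.1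
  rwa [sub_mul, one_mul, trace_sub, hρ.2, RCLike.re_to_complex, Complex.sub_re, Complex.one_re,
    sub_nonneg] at h

lemma abs_re_trace_mul_le_of_forall_isDensity {P A : Matrix (Fin d) (Fin d) ℂ} {c : ℝ}
    (h : ∀ ρ, IsDensity ρ → P * ρ = ρ → |(A * ρ).trace.re| ≤ c)
    {ρ : Matrix (Fin d) (Fin d) ℂ} (hρ : ρ.PosSemidef) (hPρ : P * ρ = ρ) :
    |(A * ρ).trace.re| ≤ c * ρ.trace.re := by
  rcases eq_or_ne ρ 0 with rfl | hρ0
  · simp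
  have hpos : 0 < ρ.trace.re := hρ.re_trace_pos hρ0
  have hnormalized := h _ (isDensity_inv_trace_smul hρ hρ0) (by rw [mul_smul_comm, hPρ])
  rwa [mul_smul_comm, trace_smul, Complex.smul_re, smul_eq_mul, abs_mul, abs_inv,
    abs_of_pos hpos, inv_mul_le_iff₀ hpos, mul_comm] at hnormalized

lemma opNorm_mul_mul_le_of_forall_isDensity {P A : Matrix (Fin d) (Fin d) ℂ}
    (hP : IsStarProjection P) (hA : A.IsHermitian) {c : ℝ} (hc : 0 ≤ c)
    (h : ∀ ρ, IsDensity ρ → P * ρ = ρ → |(A * ρ).trace.re| ≤ c) :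
    opNorm (P * A * P) ≤ c := by
  have hPh : Pᴴ = P := hP.isSelfAdjoint
  have hPAP : (P * A * P).IsHermitian := by
    simpa only [hPh] using isHermitian_conjTranspose_mul_mul P hA
  refine opNorm_le_of_abs_re_dotProduct_le hPAP hc fun x => ?_
  set y := P *ᵥ x
  have hstar : star y = star x ᵥ* P := by rw [star_mulVec, hPh]
  have hform : star x ⬝ᵥ (P * A * P) *ᵥ x = star y ⬝ᵥ A *ᵥ y := by
    rw [hstar, ← dotProduct_mulVec, ← mulVec_mulVec, ← mulVec_mulVec]
  have hnorm : (star y ⬝ᵥ y).re ≤ (star x ⬝ᵥ x).re := by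
    have h1P := (nonneg_iff_posSemidef.mp hP.one_sub_nonneg).re_dotProduct_nonneg x
    rw [hstar, ← dotProduct_mulVec, mulVec_mulVec, hP.isIdempotentElem.eq]
    simpa [sub_mulVec, dotProduct_sub] using h1P
  have hy := abs_re_trace_mul_le_of_forall_isDensity h (posSemidef_vecMulVec_self_star y)
    (by rw [mul_vecMulVec, mulVec_mulVec, hP.isIdempotentElem.eq])
  rw [mul_vecMulVec, trace_vecMulVec, trace_vecMulVec, dotProduct_comm, dotProduct_comm y] at hy
  rw [hform]
  exact hy.trans (mul_le_mul_of_nonneg_left hnorm hc)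

lemma re_trace_mul_sub_lt {P Ω : Matrix (Fin d) (Fin d) ℂ} {ε s : ℝ} (hΩ : IsPOVMElem Ω)
    (hε0 : 0 ≤ ε) (hε1 : ε ≤ 1)
    (hmin : ∀ ρ σ : Matrix (Fin d) (Fin d) ℂ, IsDensity ρ → P * ρ = ρ →
      IsDensity σ → (σ * P).trace.re ≤ 1 - ε → ε * s < (Ω * (ρ - σ)).trace.re)
    {ρ ρ' τ : Matrix (Fin d) (Fin d) ℂ} (hρ : IsDensity ρ) (hPρ : P * ρ = ρ)
    (hρ' : IsDensity ρ') (hPρ' : P * ρ' = ρ') (hτ : IsDensity τ) (hPτ : P * τ = 0) :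
    (Ω * ρ').trace.re - (Ω * ρ).trace.re < ε * (1 - s) := by
  set σ := (1 - ε) • ρ' + ε • τ
  have hσ : IsDensity σ := convex_isDensity hρ' hτ (by linarith) hε0 (by ring)
  have hσP : (σ * P).trace.re = 1 - ε := by
    simp only [σ, add_mul, smul_mul_assoc, trace_add, trace_smul, trace_mul_comm _ P, hPρ', hPτ,
      hρ'.2, trace_zero, smul_zero, add_zero, Complex.smul_re, Complex.one_re, smul_eq_mul,
      mul_one]
  have hexpect : (Ω * (ρ - σ)).trace.re =
      (Ω * ρ).trace.re - (1 - ε) * (Ω * ρ').trace.re - ε * (Ω * τ).trace.re := by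
    simp only [σ, mul_sub, mul_add, mul_smul_comm, trace_sub, trace_add, trace_smul,
      Complex.sub_re, Complex.add_re, Complex.smul_re, smul_eq_mul]
    ring
  have hτΩ : 0 ≤ ε * (Ω * τ).trace.re := mul_nonneg hε0 (hΩ.1.re_trace_mul_nonneg hτ.1)
  have hρ'Ω := mul_le_mul_of_nonneg_left (hΩ.re_trace_mul_le_one hρ') hε0
  have hvisible := hmin ρ σ hρ hPρ hσ hσP.le
  linarith

lemma abs_re_trace_mul_sub_lt {P Ω : Matrix (Fin d) (Fin d) ℂ} {ε s : ℝ} (hΩ : IsPOVMElem Ω)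
    (hε0 : 0 ≤ ε) (hε1 : ε ≤ 1)
    (hmin : ∀ ρ σ : Matrix (Fin d) (Fin d) ℂ, IsDensity ρ → P * ρ = ρ →
      IsDensity σ → (σ * P).trace.re ≤ 1 - ε → ε * s < (Ω * (ρ - σ)).trace.re)
    {ρ ρ' τ : Matrix (Fin d) (Fin d) ℂ} (hρ : IsDensity ρ) (hPρ : P * ρ = ρ)
    (hρ' : IsDensity ρ') (hPρ' : P * ρ' = ρ') (hτ : IsDensity τ) (hPτ : P * τ = 0) :
    |(Ω * ρ).trace.re - (Ω * ρ').trace.re| < ε * (1 - s) :=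
  abs_sub_lt_iff.mpr ⟨re_trace_mul_sub_lt hΩ hε0 hε1 hmin hρ' hPρ' hρ hPρ hτ hPτ,
    re_trace_mul_sub_lt hΩ hε0 hε1 hmin hρ hPρ hρ' hPρ' hτ hPτ⟩

/-- third part of Lemma 1: the diagonal deviation
Δ₂ = Π_V Ω Π_V − (tr(ΩΠ_V)/tr Π_V)·Π_V satisfies ‖Δ₂‖_∞ < ε/(1−ε). -/
theorem deviation_lemma_diag (P Ω : Matrix (Fin d) (Fin d) ℂ)
    (hP : P.IsHermitian) (hP2 : P * P = P) (hP0 : P ≠ 0) (hP1 : P ≠ 1)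
    (hΩ : IsPOVMElem Ω) (s ε : ℝ) (hs : s ∈ Set.Ioo (0 : ℝ) 1) (hε : ε ∈ Set.Ioo (0 : ℝ) 1)
    (hmin : ∀ ρ σ : Matrix (Fin d) (Fin d) ℂ, IsDensity ρ → P * ρ = ρ →
      IsDensity σ → (σ * P).trace.re ≤ 1 - ε → ε * s < (Ω * (ρ - σ)).trace.re) :
    opNorm (P * Ω * P - ((Ω * P).trace.re / P.trace.re) • P) < ε / (1 - ε) := by
  obtain ⟨hε0, hε1⟩ := hε
  have hPproj : IsStarProjection P := ⟨hP2, hP⟩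
  set t := (Ω * P).trace.re / P.trace.re
  set ρV := (P.trace.re)⁻¹ • P
  set τ := (1 - P).trace.re⁻¹ • (1 - P)
  have hρV : IsDensity ρV := isDensity_inv_trace_smul (nonneg_iff_posSemidef.mp hPproj.nonneg) hP0
  have hτ : IsDensity τ := isDensity_inv_trace_smul
    (nonneg_iff_posSemidef.mp hPproj.one_sub_nonneg) (sub_ne_zero.mpr hP1.symm)
  have hPρV : P * ρV = ρV := by rw [mul_smul_comm, hP2]
  have hPτ : P * τ = 0 := by rw [mul_smul_comm, hPproj.mul_one_sub_self, smul_zero]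
  have hΩρV : (Ω * ρV).trace.re = t := by
    rw [mul_smul_comm, trace_smul, Complex.smul_re, smul_eq_mul, inv_mul_eq_div]
  have hΔ : P * Ω * P - t • P = P * (Ω - t • 1) * P := by
    rw [mul_sub, sub_mul, mul_smul_comm, smul_mul_assoc, mul_one, hP2]
  have hΩt : (Ω - t • 1).IsHermitian :=
    hΩ.1.isHermitian.sub ((IsSelfAdjoint.all t).smul isHermitian_one)
  have hbound : opNorm (P * (Ω - t • 1) * P) ≤ ε * (1 - s) := by
    refine opNorm_mul_mul_le_of_forall_isDensity hPproj hΩt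
      (mul_nonneg hε0.le (sub_nonneg.mpr hs.2.le)) fun ρ hρ hPρ => ?_
    rw [sub_mul, smul_mul_assoc, one_mul, trace_sub, trace_smul, hρ.2, Complex.sub_re,
      Complex.smul_re, Complex.one_re, smul_eq_mul, mul_one, ← hΩρV]
    exact (abs_re_trace_mul_sub_lt hΩ hε0.le hε1.le hmin hρ hPρ hρV hPρV hτ hPτ).le
  calc opNorm (P * Ω * P - t • P) ≤ ε * (1 - s) := hΔ ▸ hbound
    _ < ε := by nlinarith [hs.1]
    _ ≤ ε / (1 - ε) := by rw [le_div_iff₀ (by linarith)]; nlinarith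

end QSVQDH
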